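/- arXiv:1907.02947 — 3 statements merged into one kernel-verified Lean document; each statement's English description precedes it below -/
import Mathlib

section
/- Dissipation theorem: if Y is a vector field on M with [Y, X_H] = 0, where X_H is the contact Hamiltonian vector field of (M, η, H), then F = −i(Y)η is a dissipated quantity, i.e., ℒ_{X_H}F = −(ℛ(H))F. -/
set_option maxHeartbeats 1000000
noncomputable section

open ContinuousLinearMap

/-- Exterior derivative of a 1-form on a normed space:
`dη_x(u,v) = (Dη(x)u)v - (Dη(x)v)u`. -/
def dOne {E : Type*} [NormedAddCommGroup E] [NormedSpace ℝ E]
    (η : E → (E →L[ℝ] ℝ)) (x : E) : E →L[ℝ] E →L[ℝ] ℝ :=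
  fderiv ℝ η x - (fderiv ℝ η x).flip

/-- `η ∧ (dη)^n` evaluated at `x` on `2n+1` tangent vectors
(the usual permutation-sum formula, up to a nonzero combinatorial constant). -/
def contactVol {E : Type*} [NormedAddCommGroup E] [NormedSpace ℝ E] (n : ℕ)
    (η : E → (E →L[ℝ] ℝ)) (x : E) (v : Fin (2*n+1) → E) : ℝ :=
  ∑ σ : Equiv.Perm (Fin (2*n+1)),
    ((Equiv.Perm.sign σ : ℤ) : ℝ) *
      (η x (v (σ ⟨0, by omega⟩)) *
        ∏ i : Fin n, dOne η x (v (σ ⟨2*(i : ℕ)+1, by have := i.isLt; omega⟩))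
          (v (σ ⟨2*(i : ℕ)+2, by have := i.isLt; omega⟩)))

/-- The contact-form condition: `η` is smooth and `η ∧ (dη)^n` is a volume form
(nowhere vanishing). -/
def IsContactForm {E : Type*} [NormedAddCommGroup E] [NormedSpace ℝ E] (n : ℕ)
    (η : E → (E →L[ℝ] ℝ)) : Prop :=
  ContDiff ℝ (⊤ : ℕ∞) η ∧ ∀ x : E, ∃ v : Fin (2*n+1) → E, contactVol n η x v ≠ 0

/-- The Reeb vector field conditions: `i(R)dη = 0` and `i(R)η = 1`. -/
def IsReeb {E : Type*} [NormedAddCommGroup E] [NormedSpace ℝ E]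
    (η : E → (E →L[ℝ] ℝ)) (R : E → E) : Prop :=
  ContDiff ℝ (⊤ : ℕ∞) R ∧ ∀ x : E, dOne η x (R x) = 0 ∧ η x (R x) = 1

/-- The contact Hamilton equations `i(X)dη = dH - (ℛ(H))η`, `i(X)η = -H`. -/
def IsContactHamVF {E : Type*} [NormedAddCommGroup E] [NormedSpace ℝ E]
    (η : E → (E →L[ℝ] ℝ)) (R : E → E) (H : E → ℝ) (X : E → E) : Prop :=
  ∀ x : E, dOne η x (X x) = fderiv ℝ H x - (fderiv ℝ H x (R x)) • η x
    ∧ η x (X x) = - H x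

/-- Lie bracket of vector fields on a normed space. -/
def lieBracketVF {E : Type*} [NormedAddCommGroup E] [NormedSpace ℝ E]
    (X Y : E → E) (x : E) : E :=
  fderiv ℝ Y x (X x) - fderiv ℝ X x (Y x)

/-- Lie derivative of a 1-form along a vector field, via Cartan's formula
`ℒ_X η = i(X)dη + d(i(X)η)`. -/
def lieDerivOne {E : Type*} [NormedAddCommGroup E] [NormedSpace ℝ E]
    (X : E → E) (η : E → (E →L[ℝ] ℝ)) (x : E) : E →L[ℝ] ℝ :=
  dOne η x (X x) + fderiv ℝ (fun y => η y (X y)) x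

/-- The flat map `♭(X) = i(X)dη + (i(X)η) η`. -/
def flatMap {E : Type*} [NormedAddCommGroup E] [NormedSpace ℝ E]
    (η : E → (E →L[ℝ] ℝ)) (X : E → E) : E → (E →L[ℝ] ℝ) :=
  fun x => dOne η x (X x) + η x (X x) • η x

/-- **dissipation theorem.** If `Y` is a vector field with `[Y, X_H] = 0`,
then `F = -i(Y)η` is a dissipated quantity: `ℒ_{X_H}F = -(ℛ(H))F`. -/
theorem dissipation_theorem {E : Type*} [NormedAddCommGroup E]
    [NormedSpace ℝ E] [FiniteDimensional ℝ E] (n : ℕ) (hdim : Module.finrank ℝ E = 2*n+1)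
    (η : E → (E →L[ℝ] ℝ)) (hη : IsContactForm n η)
    (R : E → E) (hR : IsReeb η R) (H : E → ℝ) (hH : ContDiff ℝ (⊤ : ℕ∞) H)
    (X : E → E) (hXs : ContDiff ℝ (⊤ : ℕ∞) X) (hX : IsContactHamVF η R H X)
    (Y : E → E) (hYs : ContDiff ℝ (⊤ : ℕ∞) Y)
    (hcomm : ∀ x : E, lieBracketVF Y X x = 0) :
    ∀ x : E, fderiv ℝ (fun y => -(η y (Y y))) x (X x)
      = -(fderiv ℝ H x (R x)) * (-(η x (Y x))) := by

  intro x
  have hηd : DifferentiableAt ℝ η x := (hη.1.differentiable (by simp)).differentiableAt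
  have hXd : DifferentiableAt ℝ X x := (hXs.differentiable (by simp)).differentiableAt
  have hYd : DifferentiableAt ℝ Y x := (hYs.differentiable (by simp)).differentiableAt
  have hprodY : fderiv ℝ (fun y => η y (Y y)) x =
      (η x).comp (fderiv ℝ Y x) + (fderiv ℝ η x).flip (Y x) :=
    fderiv_clm_apply hηd hYd
  have hprodX : fderiv ℝ (fun y => η y (X y)) x =
      (η x).comp (fderiv ℝ X x) + (fderiv ℝ η x).flip (X x) :=
    fderiv_clm_apply hηd hXd
  have hfun : (fun y => η y (X y)) = fun y => -H y := funext fun y => (hX y).2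
  have hdX : fderiv ℝ (fun y => η y (X y)) x = -fderiv ℝ H x := by
    rw [hfun]; exact fderiv_neg
  -- equation 2: from product rule applied to η(X), evaluated at Y x
  have e2 : η x (fderiv ℝ X x (Y x)) + fderiv ℝ η x (Y x) (X x)
      = -(fderiv ℝ H x (Y x)) := by
    have := congrArg (fun L : E →L[ℝ] ℝ => L (Y x)) (hprodX.symm.trans hdX)
    simpa using this
  -- equation 1: from the contact Hamilton equation, evaluated at Y x
  have e1 : fderiv ℝ η x (X x) (Y x) - fderiv ℝ η x (Y x) (X x)
      = fderiv ℝ H x (Y x) - fderiv ℝ H x (R x) * η x (Y x) := by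
    have := congrArg (fun L : E →L[ℝ] ℝ => L (Y x)) (hX x).1
    simpa [dOne, ContinuousLinearMap.sub_apply, ContinuousLinearMap.flip_apply,
      smul_eq_mul] using this
  -- commutation
  have hc : fderiv ℝ X x (Y x) = fderiv ℝ Y x (X x) := by
    have := hcomm x
    rw [lieBracketVF, sub_eq_zero] at this
    exact this
  have hneg : fderiv ℝ (fun y => -(η y (Y y))) x = -fderiv ℝ (fun y => η y (Y y)) x :=
    fderiv_neg
  have hL : fderiv ℝ (fun y => -(η y (Y y))) x (X x)
      = -(η x (fderiv ℝ Y x (X x)) + fderiv ℝ η x (X x) (Y x)) := by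
    rw [hneg, hprodY]
    simp
  rw [hL, ← hc]
  nlinarith [e1, e2]
end
end

section
/- For a vector field Y on M, F = −i(Y)η is a dissipated quantity of the contact Hamiltonian system (M, η, H) if and only if i([Y, X_H])η = 0, i.e., [Y, X_H] ∈ ker η. -/
noncomputable section

open ContinuousLinearMap

/-- `F = -i(Y)η` is a dissipated quantity of `(M, η, H)` iff
`i([Y, X_H])η = 0`, i.e. `[Y, X_H] ∈ ker η`. -/
theorem dissipated_iff_bracket_ker {E : Type*} [NormedAddCommGroup E]
    [NormedSpace ℝ E] [FiniteDimensional ℝ E] (n : ℕ) (hdim : Module.finrank ℝ E = 2*n+1)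
    (η : E → (E →L[ℝ] ℝ)) (hη : IsContactForm n η)
    (R : E → E) (hR : IsReeb η R) (H : E → ℝ) (hH : ContDiff ℝ (⊤ : ℕ∞) H)
    (X : E → E) (hXs : ContDiff ℝ (⊤ : ℕ∞) X) (hX : IsContactHamVF η R H X)
    (Y : E → E) (hYs : ContDiff ℝ (⊤ : ℕ∞) Y) :
    (∀ x : E, fderiv ℝ (fun y => -(η y (Y y))) x (X x)
        = -(fderiv ℝ H x (R x)) * (-(η x (Y x))))
    ↔ (∀ x : E, η x (lieBracketVF Y X x) = 0) := by
  have key : ∀ x : E, fderiv ℝ (fun y => -(η y (Y y))) x (X x)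
      = fderiv ℝ H x (R x) * η x (Y x) + η x (lieBracketVF Y X x) := by
    intro x
    have hηd : DifferentiableAt ℝ η x := (hη.1.differentiable (by simp)) x
    have hYd : DifferentiableAt ℝ Y x := (hYs.differentiable (by simp)) x
    have hXd : DifferentiableAt ℝ X x := (hXs.differentiable (by simp)) x
    set A := fderiv ℝ η x (X x) (Y x) with hA
    set B := fderiv ℝ η x (Y x) (X x) with hB
    have h1 : fderiv ℝ (fun y => η y (Y y)) x (X x)
        = A + η x (fderiv ℝ Y x (X x)) := by
      rw [fderiv_clm_apply hηd hYd]
      simp only [ContinuousLinearMap.add_apply, ContinuousLinearMap.flip_apply,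
        ContinuousLinearMap.coe_comp', Function.comp_apply]
      rw [hA]; ring
    have h2 : fderiv ℝ (fun y => η y (X y)) x (Y x)
        = B + η x (fderiv ℝ X x (Y x)) := by
      rw [fderiv_clm_apply hηd hXd]
      simp only [ContinuousLinearMap.add_apply, ContinuousLinearMap.flip_apply,
        ContinuousLinearMap.coe_comp', Function.comp_apply]
      rw [hB]; ring
    have h2' : fderiv ℝ (fun y => η y (X y)) x (Y x) = - fderiv ℝ H x (Y x) := by
      have : (fun y => η y (X y)) = fun y => -H y := funext fun y => (hX y).2
      rw [this, fderiv_fun_neg]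
      simp
    have hHam : A - B = fderiv ℝ H x (Y x)
        - fderiv ℝ H x (R x) * η x (Y x) := by
      have := congrArg (fun (L : E →L[ℝ] ℝ) => L (Y x)) (hX x).1
      simpa [dOne, ContinuousLinearMap.sub_apply, ContinuousLinearMap.flip_apply,
        ContinuousLinearMap.smul_apply, hA, hB, smul_eq_mul] using this
    have hbr : η x (lieBracketVF Y X x)
        = η x (fderiv ℝ X x (Y x)) - η x (fderiv ℝ Y x (X x)) := by
      simp [lieBracketVF, map_sub]
    have hneg : fderiv ℝ (fun y => -(η y (Y y))) x (X x)
        = -(fderiv ℝ (fun y => η y (Y y)) x (X x)) := by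
      have : (fun y => -(η y (Y y))) = fun y => -((fun y => η y (Y y)) y) := rfl
      rw [this, fderiv_fun_neg]
      simp
    have hB' : B = - fderiv ℝ H x (Y x) - η x (fderiv ℝ X x (Y x)) := by
      rw [h2'] at h2; linarith
    rw [hneg, h1, hbr]
    have hA' : A = - fderiv ℝ H x (R x) * η x (Y x) - η x (fderiv ℝ X x (Y x)) := by
      rw [hB'] at hHam; linarith
    rw [hA']; ring
  constructor
  · intro h x
    have := h x
    rw [key x] at this
    linarith
  · intro h x
    rw [key x, h x]
    ring
end
end

section
/- If Φ : M → M is a contact symmetry (Φ*η = η, H ∘ Φ = H) of a contact Hamiltonian system and F is a dissipated quantity (X_H(F) = −(ℛ(H))F), then F ∘ Φ is also a dissipated quantity. -/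
noncomputable section

open ContinuousLinearMap

namespace ContactAux

variable {E : Type*} [NormedAddCommGroup E] [NormedSpace ℝ E]

variable (n : ℕ)

def i0 : Fin (2*n+1) := ⟨0, by omega⟩
def aIdx (j : Fin n) : Fin (2*n+1) := ⟨2*(j:ℕ)+1, by have := j.isLt; omega⟩
def bIdx (j : Fin n) : Fin (2*n+1) := ⟨2*(j:ℕ)+2, by have := j.isLt; omega⟩

lemma aIdx_ne_i0 (j : Fin n) : aIdx n j ≠ i0 n := by
  simp [aIdx, i0, Fin.ext_iff]

lemma bIdx_ne_i0 (j : Fin n) : bIdx n j ≠ i0 n := by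
  simp [bIdx, i0, Fin.ext_iff]

lemma aIdx_ne_bIdx (j j' : Fin n) : aIdx n j ≠ bIdx n j' := by
  simp only [aIdx, bIdx, Fin.ext_iff, ne_eq]
  omega

lemma aIdx_inj {j j' : Fin n} (h : aIdx n j = aIdx n j') : j = j' := by
  simp only [aIdx, Fin.ext_iff] at h ⊢; omega

lemma bIdx_inj {j j' : Fin n} (h : bIdx n j = bIdx n j') : j = j' := by
  simp only [bIdx, Fin.ext_iff] at h ⊢; omega

lemma classify (k : Fin (2*n+1)) :
    k = i0 n ∨ (∃ j, k = aIdx n j) ∨ (∃ j, k = bIdx n j) := by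
  rcases k with ⟨k, hk⟩
  rcases Nat.even_or_odd k with ⟨m, hm⟩ | ⟨m, hm⟩
  · rcases Nat.eq_zero_or_pos m with rfl | hmpos
    · exact Or.inl (by simp [i0, Fin.ext_iff, hm])
    · refine Or.inr (Or.inr ⟨⟨m - 1, by omega⟩, ?_⟩)
      simp only [bIdx, Fin.ext_iff]; omega
  · refine Or.inr (Or.inl ⟨⟨m, by omega⟩, ?_⟩)
    simp only [aIdx, Fin.ext_iff]; omega

variable (e : E →L[ℝ] ℝ) (d : E →L[ℝ] E →L[ℝ] ℝ)

/-- Base (non-alternating) term. -/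
def tVol (w : Fin (2*n+1) → E) : ℝ :=
  e (w (i0 n)) * ∏ j : Fin n, d (w (aIdx n j)) (w (bIdx n j))

lemma tVol_update_exists [DecidableEq (Fin (2*n+1))] (w : Fin (2*n+1) → E) (k : Fin (2*n+1)) :
    ∃ L : E →L[ℝ] ℝ, ∀ u, tVol n e d (Function.update w k u) = L u := by
  rcases classify n k with rfl | ⟨j0, rfl⟩ | ⟨j0, rfl⟩
  · refine ⟨(∏ j : Fin n, d (w (aIdx n j)) (w (bIdx n j))) • e, fun u => ?_⟩
    simp only [tVol, Function.update_self, smul_apply, smul_eq_mul]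
    rw [Finset.prod_congr rfl fun j _ => by
      rw [Function.update_of_ne (aIdx_ne_i0 n j), Function.update_of_ne (bIdx_ne_i0 n j)]]
    ring
  · refine ⟨(e (w (i0 n)) * ∏ j ∈ Finset.univ.erase j0, d (w (aIdx n j)) (w (bIdx n j))) •
      (d.flip (w (bIdx n j0))), fun u => ?_⟩
    have h1 : Function.update w (aIdx n j0) u (i0 n) = w (i0 n) :=
      Function.update_of_ne (Ne.symm (aIdx_ne_i0 n j0)) _ _
    have h2 : ∀ j ∈ Finset.univ.erase j0,
        d (Function.update w (aIdx n j0) u (aIdx n j))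
          (Function.update w (aIdx n j0) u (bIdx n j)) =
        d (w (aIdx n j)) (w (bIdx n j)) := by
      intro j hj
      rw [Function.update_of_ne (fun h => (Finset.mem_erase.1 hj).1 (aIdx_inj n h)),
        Function.update_of_ne (Ne.symm (aIdx_ne_bIdx n j0 j))]
    rw [tVol, ← Finset.mul_prod_erase Finset.univ _ (Finset.mem_univ j0),
      Finset.prod_congr rfl h2, h1, Function.update_self,
      Function.update_of_ne (Ne.symm (aIdx_ne_bIdx n j0 j0))]
    simp only [smul_apply, smul_eq_mul, flip_apply]
    ring
  · refine ⟨(e (w (i0 n)) * ∏ j ∈ Finset.univ.erase j0, d (w (aIdx n j)) (w (bIdx n j))) •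
      (d (w (aIdx n j0))), fun u => ?_⟩
    have h1 : Function.update w (bIdx n j0) u (i0 n) = w (i0 n) :=
      Function.update_of_ne (Ne.symm (bIdx_ne_i0 n j0)) _ _
    have h2 : ∀ j ∈ Finset.univ.erase j0,
        d (Function.update w (bIdx n j0) u (aIdx n j))
          (Function.update w (bIdx n j0) u (bIdx n j)) =
        d (w (aIdx n j)) (w (bIdx n j)) := by
      intro j hj
      rw [Function.update_of_ne (aIdx_ne_bIdx n j j0),
        Function.update_of_ne (fun h => (Finset.mem_erase.1 hj).1 (bIdx_inj n h))]
    rw [tVol, ← Finset.mul_prod_erase Finset.univ _ (Finset.mem_univ j0),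
      Finset.prod_congr rfl h2, h1, Function.update_self,
      Function.update_of_ne (aIdx_ne_bIdx n j0 j0)]
    simp only [smul_apply, smul_eq_mul]
    ring

/-- The permutation sum, as a multilinear map. -/
def mVol : MultilinearMap ℝ (fun _ : Fin (2*n+1) => E) ℝ where
  toFun w := ∑ σ : Equiv.Perm (Fin (2*n+1)),
    ((Equiv.Perm.sign σ : ℤ) : ℝ) * tVol n e d (w ∘ σ)
  map_update_add' := by
    intro _ w i u u'
    rw [← Finset.sum_add_distrib]
    refine Finset.sum_congr rfl fun σ _ => ?_
    obtain ⟨L, hL⟩ := tVol_update_exists n e d (w ∘ σ) (σ.symm i)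
    have hcup : ∀ z : E, Function.update w i z ∘ ⇑σ
        = Function.update (w ∘ ⇑σ) (σ.symm i) z := by
      intro z; funext k
      simp only [Function.comp_apply, Function.update_apply]
      by_cases h : k = σ.symm i
      · simp [h]
      · rw [if_neg h, if_neg fun hh => h (by simp [← hh])]
    rw [hcup, hcup, hcup, hL, hL, hL, map_add]
    ring
  map_update_smul' := by
    intro _ w i c u
    rw [Finset.smul_sum]
    refine Finset.sum_congr rfl fun σ _ => ?_
    obtain ⟨L, hL⟩ := tVol_update_exists n e d (w ∘ σ) (σ.symm i)
    have hcup : ∀ z : E, Function.update w i z ∘ ⇑σ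
        = Function.update (w ∘ ⇑σ) (σ.symm i) z := by
      intro z; funext k
      simp only [Function.comp_apply, Function.update_apply]
      by_cases h : k = σ.symm i
      · simp [h]
      · rw [if_neg h, if_neg fun hh => h (by simp [← hh])]
    rw [hcup, hcup, hL, hL, map_smul]
    simp only [smul_eq_mul]
    ring

/-- The permutation sum, as an alternating map. -/
def aVol : E [⋀^Fin (2*n+1)]→ₗ[ℝ] ℝ :=
  { mVol n e d with
    map_eq_zero_of_eq' := by
      intro w i j hw hij
      have hswap : ∀ m, w (Equiv.swap i j m) = w m := by
        intro m
        rcases eq_or_ne m i with rfl | hmi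
        · rw [Equiv.swap_apply_left, hw]
        rcases eq_or_ne m j with rfl | hmj
        · rw [Equiv.swap_apply_right, hw]
        · rw [Equiv.swap_apply_of_ne_of_ne hmi hmj]
      set F : Equiv.Perm (Fin (2*n+1)) → ℝ := fun σ =>
        ((Equiv.Perm.sign σ : ℤ) : ℝ) * tVol n e d (w ∘ σ) with hF
      have key : ∀ σ, F (Equiv.swap i j * σ) = - F σ := by
        intro σ
        have h1 : w ∘ (Equiv.swap i j * σ) = w ∘ σ := by
          funext k; simp only [Function.comp_apply, Equiv.Perm.mul_apply, hswap]
        have h2 : Equiv.Perm.sign (Equiv.swap i j * σ) = - Equiv.Perm.sign σ := by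
          rw [Equiv.Perm.sign_mul, Equiv.Perm.sign_swap hij, neg_one_mul]
        simp only [hF, h1, h2, Units.val_neg, Int.cast_neg]
        ring
      have h3 : ∑ σ : Equiv.Perm (Fin (2*n+1)), F σ
          = ∑ σ : Equiv.Perm (Fin (2*n+1)), F (Equiv.swap i j * σ) :=
        (Equiv.sum_comp (Equiv.mulLeft (Equiv.swap i j)) F).symm
      have h4 : ∑ σ : Equiv.Perm (Fin (2*n+1)), F σ
          = - ∑ σ : Equiv.Perm (Fin (2*n+1)), F σ := by
        calc ∑ σ : Equiv.Perm (Fin (2*n+1)), F σ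
            = ∑ σ : Equiv.Perm (Fin (2*n+1)), F (Equiv.swap i j * σ) := h3
          _ = ∑ σ : Equiv.Perm (Fin (2*n+1)), - F σ :=
              Finset.sum_congr rfl fun σ _ => key σ
          _ = - ∑ σ : Equiv.Perm (Fin (2*n+1)), F σ := Finset.sum_neg_distrib _
      change ∑ σ : Equiv.Perm (Fin (2*n+1)), F σ = 0
      linarith }

lemma aVol_apply (w : Fin (2*n+1) → E) :
    aVol n e d w = ∑ σ : Equiv.Perm (Fin (2*n+1)),
      ((Equiv.Perm.sign σ : ℤ) : ℝ) * tVol n e d (w ∘ σ) := rfl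

lemma aVol_eq_zero_of_ker (hd : ∀ u v, d v u = - d u v) (v : E)
    (he : e v = 0) (hdv : d v = 0) (w : Fin (2*n+1) → E) (i : Fin (2*n+1))
    (hwi : w i = v) : aVol n e d w = 0 := by
  rw [aVol_apply]
  refine Finset.sum_eq_zero fun σ _ => ?_
  have hk : (w ∘ σ) (σ.symm i) = v := by simp [hwi]
  apply mul_eq_zero_of_right
  rcases classify n (σ.symm i) with h | ⟨j0, h⟩ | ⟨j0, h⟩
  · rw [h] at hk
    simp only [tVol]
    rw [hk, he, zero_mul]
  · rw [h] at hk
    simp only [tVol]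
    apply mul_eq_zero_of_right
    exact Finset.prod_eq_zero (Finset.mem_univ j0)
      (by rw [hk, hdv]; exact ContinuousLinearMap.zero_apply _)
  · rw [h] at hk
    simp only [tVol]
    apply mul_eq_zero_of_right
    refine Finset.prod_eq_zero (Finset.mem_univ j0) ?_
    rw [hk, hd v ((w ∘ ⇑σ) (aIdx n j0)), hdv]
    simp

theorem nondeg [FiniteDimensional ℝ E] (hdim : Module.finrank ℝ E = 2*n+1)
    (hd : ∀ u v, d v u = - d u v)
    (hne : ∃ w : Fin (2*n+1) → E, aVol n e d w ≠ 0)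
    (v : E) (he : e v = 0) (hdv : d v = 0) : v = 0 := by
  by_contra hv
  obtain ⟨w, hw⟩ := hne
  have hli : LinearIndepOn ℝ id ({v} : Set E) :=
    (LinearIndepOn.singleton hv)
  let b0 := Module.Basis.extend hli
  have : Fintype (hli.extend (Set.subset_univ _)) :=
    FiniteDimensional.fintypeBasisIndex b0
  have hcard : Fintype.card (hli.extend (Set.subset_univ _)) = 2*n+1 := by
    rw [← Module.finrank_eq_card_basis b0, hdim]
  let b := b0.reindex (Fintype.equivFinOfCardEq hcard)
  have hvmem : ∃ i, b i = v := by
    have hv' : v ∈ hli.extend (Set.subset_univ _) :=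
      hli.subset_extend _ rfl
    refine ⟨Fintype.equivFinOfCardEq hcard ⟨v, hv'⟩, ?_⟩
    rw [Module.Basis.reindex_apply, Equiv.symm_apply_apply]
    exact Module.Basis.extend_apply_self hli ⟨v, hv'⟩
  obtain ⟨i, hi⟩ := hvmem
  have hbz : aVol n e d ⇑b = 0 :=
    aVol_eq_zero_of_ker n e d hd v he hdv ⇑b i hi
  have := (aVol n e d).eq_smul_basis_det b
  rw [this] at hw
  simp [hbz] at hw

end ContactAux

lemma ContactAux.dOne_antisymm {E : Type*} [NormedAddCommGroup E] [NormedSpace ℝ E]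
    (η : E → (E →L[ℝ] ℝ)) (x : E) (u v : E) : dOne η x v u = - dOne η x u v := by
  simp only [dOne, ContinuousLinearMap.sub_apply, ContinuousLinearMap.flip_apply]
  ring

lemma ContactAux.contactVol_eq_aVol {E : Type*} [NormedAddCommGroup E] [NormedSpace ℝ E]
    (n : ℕ) (η : E → (E →L[ℝ] ℝ)) (x : E) (w : Fin (2*n+1) → E) :
    contactVol n η x w = ContactAux.aVol n (η x) (dOne η x) w := rfl

/-- Nondegeneracy of the contact structure: a vector killed by `η x` and `i(-)dη x`
vanishes. -/
lemma ContactAux.contact_nondeg {E : Type*} [NormedAddCommGroup E] [NormedSpace ℝ E]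
    [FiniteDimensional ℝ E] (n : ℕ) (hdim : Module.finrank ℝ E = 2*n+1)
    (η : E → (E →L[ℝ] ℝ)) (hη : IsContactForm n η) (x : E) (v : E)
    (he : η x v = 0) (hdv : dOne η x v = 0) : v = 0 := by
  refine ContactAux.nondeg n (η x) (dOne η x) hdim
    (fun u v' => ContactAux.dOne_antisymm η x u v') ?_ v he hdv
  obtain ⟨w, hw⟩ := hη.2 x
  exact ⟨w, by rwa [← ContactAux.contactVol_eq_aVol]⟩

/-- If `Φ` is a contact symmetry (`Φ*η = η`, `H ∘ Φ = H`) and `F` is a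
dissipated quantity, then `F ∘ Φ` is a dissipated quantity. -/
theorem pullback_of_dissipated {E : Type*} [NormedAddCommGroup E]
    [NormedSpace ℝ E] [FiniteDimensional ℝ E] (n : ℕ) (hdim : Module.finrank ℝ E = 2*n+1)
    (η : E → (E →L[ℝ] ℝ)) (hη : IsContactForm n η)
    (R : E → E) (hR : IsReeb η R) (H : E → ℝ) (hH : ContDiff ℝ (⊤ : ℕ∞) H)
    (X : E → E) (hXs : ContDiff ℝ (⊤ : ℕ∞) X) (hX : IsContactHamVF η R H X)
    (Φ Ψ : E → E) (hΦ : ContDiff ℝ (⊤ : ℕ∞) Φ) (hΨ : ContDiff ℝ (⊤ : ℕ∞) Ψ)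
    (hinv : Function.LeftInverse Ψ Φ) (hinv' : Function.RightInverse Ψ Φ)
    (hpull : ∀ x : E, ∀ v : E, η (Φ x) (fderiv ℝ Φ x v) = η x v)
    (hHinv : ∀ x : E, H (Φ x) = H x)
    (F : E → ℝ) (hFd : Differentiable ℝ F)
    (hF : ∀ x : E, fderiv ℝ F x (X x) = -(fderiv ℝ H x (R x)) * F x) :
    ∀ x : E, fderiv ℝ (fun y => F (Φ y)) x (X x)
      = -(fderiv ℝ H x (R x)) * F (Φ x) := by
  intro x
  have hΦd : Differentiable ℝ Φ := hΦ.differentiable (by simp)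
  have hΨd : Differentiable ℝ Ψ := hΨ.differentiable (by simp)
  have hηd : Differentiable ℝ η := hη.1.differentiable (by simp)
  have hHd : Differentiable ℝ H := hH.differentiable (by simp)
  have hDΦd : Differentiable ℝ (fderiv ℝ Φ) :=
    (hΦ.fderiv_right (m := (⊤ : ℕ∞)) (by simp)).differentiable (by simp)
  -- surjectivity of `fderiv ℝ Φ x`
  have hsurj : ∀ w : E, fderiv ℝ Φ x (fderiv ℝ Ψ (Φ x) w) = w := by
    intro w
    have hid : Φ ∘ Ψ = _root_.id := funext hinv'
    have h1 : fderiv ℝ (Φ ∘ Ψ) (Φ x) = (fderiv ℝ Φ (Ψ (Φ x))).comp (fderiv ℝ Ψ (Φ x)) :=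
      fderiv_comp _ (hΦd _) (hΨd _)
    rw [hid, fderiv_id] at h1
    have h2 := congrArg (fun L : E →L[ℝ] E => L w) h1
    simp only [ContinuousLinearMap.coe_id', id_eq, ContinuousLinearMap.coe_comp',
      Function.comp_apply, hinv x] at h2
    exact h2.symm
  -- pullback identity for `dOne`
  have hpd : ∀ u w' : E,
      dOne η (Φ x) (fderiv ℝ Φ x u) (fderiv ℝ Φ x w') = dOne η x u w' := by
    have hB : (fun y => (η (Φ y)).comp (fderiv ℝ Φ y)) = η :=
      funext fun y => ContinuousLinearMap.ext fun v => hpull y v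
    have hc : DifferentiableAt ℝ (fun y => η (Φ y)) x :=
      (hηd (Φ x)).comp x (hΦd x)
    have hcc := fderiv_clm_comp hc (hDΦd x)
    rw [hB] at hcc
    have hηΦ : fderiv ℝ (fun y => η (Φ y)) x = (fderiv ℝ η (Φ x)).comp (fderiv ℝ Φ x) :=
      fderiv_comp x (hηd _) (hΦd x)
    have hsymm : ∀ u w' : E,
        fderiv ℝ (fderiv ℝ Φ) x u w' = fderiv ℝ (fderiv ℝ Φ) x w' u :=
      (hΦ.contDiffAt.isSymmSndFDerivAt (by rw [minSmoothness_of_isRCLikeNormedField]; exact (WithTop.coe_le_coe.mpr le_top : ((2:ℕ∞):WithTop ℕ∞) ≤ ((⊤:ℕ∞):WithTop ℕ∞)))).eq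
    have hptw : ∀ u w' : E, fderiv ℝ η x u w'
        = η (Φ x) ((fderiv ℝ (fderiv ℝ Φ) x u) w')
          + fderiv ℝ η (Φ x) (fderiv ℝ Φ x u) (fderiv ℝ Φ x w') := by
      intro u w'
      conv_lhs => rw [hcc]
      rw [hηΦ] at hcc ⊢
      simp only [hηΦ, ContinuousLinearMap.add_apply, ContinuousLinearMap.coe_comp',
        Function.comp_apply, ContinuousLinearMap.compL_apply,
        ContinuousLinearMap.flip_apply]
    intro u w'
    have e1 := hptw u w'
    have e2 := hptw w' u
    have e3 := hsymm u w'
    simp only [dOne, ContinuousLinearMap.sub_apply, ContinuousLinearMap.flip_apply]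
    rw [e3] at e1
    linarith
  -- nondegeneracy at `Φ x`
  have hnd : ∀ v : E, η (Φ x) v = 0 → dOne η (Φ x) v = 0 → v = 0 := fun v he hdv =>
    ContactAux.contact_nondeg n hdim η hη (Φ x) v he hdv
  -- `Φ` pushes `R` to `R`
  have hRkey : fderiv ℝ Φ x (R x) = R (Φ x) := by
    have h0 : fderiv ℝ Φ x (R x) - R (Φ x) = 0 := by
      apply hnd
      · rw [map_sub, hpull x (R x), (hR.2 x).2, (hR.2 (Φ x)).2, sub_self]
      · ext w
        simp only [map_sub, ContinuousLinearMap.sub_apply, ContinuousLinearMap.zero_apply]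
        have h1 : dOne η (Φ x) (fderiv ℝ Φ x (R x)) w = 0 := by
          rw [← hsurj w, hpd, (hR.2 x).1, ContinuousLinearMap.zero_apply]
        have h2 : dOne η (Φ x) (R (Φ x)) w = 0 := by
          rw [(hR.2 (Φ x)).1, ContinuousLinearMap.zero_apply]
        rw [h1, h2, sub_self]
    exact sub_eq_zero.mp h0
  -- chain rule for H
  have hcH : fderiv ℝ H x = (fderiv ℝ H (Φ x)).comp (fderiv ℝ Φ x) := by
    have h1 : fderiv ℝ (fun y => H (Φ y)) x = (fderiv ℝ H (Φ x)).comp (fderiv ℝ Φ x) :=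
      fderiv_comp x (hHd _) (hΦd _)
    have hHΦ : (fun y => H (Φ y)) = H := funext hHinv
    rwa [hHΦ] at h1
  have hRH : fderiv ℝ H (Φ x) (R (Φ x)) = fderiv ℝ H x (R x) := by
    rw [← hRkey, hcH]
    simp only [ContinuousLinearMap.coe_comp', Function.comp_apply]
  have hHpull : ∀ u : E, fderiv ℝ H (Φ x) (fderiv ℝ Φ x u) = fderiv ℝ H x u := by
    intro u
    rw [hcH]
    simp only [ContinuousLinearMap.coe_comp', Function.comp_apply]
  -- `Φ` pushes `X` to `X`
  have hXkey : fderiv ℝ Φ x (X x) = X (Φ x) := by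
    have h0 : fderiv ℝ Φ x (X x) - X (Φ x) = 0 := by
      apply hnd
      · rw [map_sub, hpull x (X x), (hX x).2, (hX (Φ x)).2, hHinv x, sub_self]
      · ext w
        simp only [map_sub, ContinuousLinearMap.sub_apply, ContinuousLinearMap.zero_apply]
        rw [← hsurj w]
        rw [hpd (X x) (fderiv ℝ Ψ (Φ x) w)]
        rw [(hX x).1, (hX (Φ x)).1]
        simp only [ContinuousLinearMap.sub_apply, ContinuousLinearMap.smul_apply,
          smul_eq_mul]
        rw [hpull x (fderiv ℝ Ψ (Φ x) w), hRH, hHpull (fderiv ℝ Ψ (Φ x) w)]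
        ring
    exact sub_eq_zero.mp h0
  -- conclusion
  have hcF : fderiv ℝ (fun y => F (Φ y)) x = (fderiv ℝ F (Φ x)).comp (fderiv ℝ Φ x) :=
    fderiv_comp x (hFd _) (hΦd _)
  rw [hcF]
  simp only [ContinuousLinearMap.coe_comp', Function.comp_apply]
  rw [hXkey, hF (Φ x), hRH]
end
end
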